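/- Let H be a Hopf algebra over a field k, A a left H-module algebra, and G a right Gabriel topology on A such that every element of S(H) acts on A as a G-continuous transformation (i.e., for all h ∈ S(H) and I ∈ G there exists J ∈ G with hJ ⊆ I). If V is a G-torsion right A-module, then U ⊗ V with the twisted A-action (u ⊗ v)a = Σ u₍₀₎ ⊗ v(S(u₍₁₎)a) is a G-torsion right A-module, for any right H-comodule U. -/
import Mathlib


open TensorProduct

/-- `act` makes the `k`-algebra `A` into a left `H`-module algebra:
`h ⊳ (a b) = ∑ (h₍₁₎ ⊳ a)(h₍₂₎ ⊳ b)` and `h ⊳ 1 = ε(h) 1`, together with the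
left `H`-module axioms. -/
def IsModuleAlgebra (k : Type*) [Field k] {H A : Type*} [Ring H] [HopfAlgebra k H]
    [Ring A] [Algebra k A] (act : H →ₗ[k] A →ₗ[k] A) : Prop :=
  (∀ g h : H, act (g * h) = (act g) ∘ₗ (act h)) ∧
  (act 1 = LinearMap.id) ∧
  (∀ (h : H) (a b : A),
    act h (a * b) =
      LinearMap.mul' k A ((TensorProduct.map (act.flip a) (act.flip b))
        (Coalgebra.comul h))) ∧
  (∀ h : H, act h 1 = Coalgebra.counit (R := k) h • (1 : A))

/-- `γ : U → U ⊗ H` is a right `H`-comodule structure on `U` (coassociativity and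
counit axioms). -/
def IsRightComodule (k : Type*) [Field k] {H U : Type*} [Ring H] [HopfAlgebra k H]
    [AddCommGroup U] [Module k U] (γ : U →ₗ[k] U ⊗[k] H) : Prop :=
  ((TensorProduct.assoc k U H H).toLinearMap ∘ₗ
      (TensorProduct.map γ LinearMap.id) ∘ₗ γ =
    (TensorProduct.map LinearMap.id Coalgebra.comul) ∘ₗ γ) ∧
  ((TensorProduct.rid k U).toLinearMap ∘ₗ
      (TensorProduct.map LinearMap.id (Coalgebra.counit (R := k))) ∘ₗ γ =
    LinearMap.id)

/-- `ψ` is a right action of the `k`-algebra `B` on `V`. -/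
def IsRightAction (k : Type*) [Field k] {B V : Type*} [Ring B] [Algebra k B]
    [AddCommGroup V] [Module k V] (ψ : B →ₗ[k] V →ₗ[k] V) : Prop :=
  ψ 1 = LinearMap.id ∧ ∀ a b : B, ψ (a * b) = (ψ b) ∘ₗ (ψ a)

/-- The twisted action of `a ∈ B` on `U ⊗ V`: `(u ⊗ v)·a = ∑ u₍₀₎ ⊗ v(S(u₍₁₎)a)`. -/
noncomputable def twistAct (k : Type*) [Field k] {H B U V : Type*} [Ring H]
    [HopfAlgebra k H] [Ring B] [Algebra k B] [AddCommGroup U] [Module k U]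
    [AddCommGroup V] [Module k V] (act : H →ₗ[k] B →ₗ[k] B)
    (γ : U →ₗ[k] U ⊗[k] H) (ψ : B →ₗ[k] V →ₗ[k] V) (a : B) :
    U ⊗[k] V →ₗ[k] U ⊗[k] V :=
  (TensorProduct.map LinearMap.id
      (TensorProduct.lift (ψ ∘ₗ act.flip a ∘ₗ HopfAlgebra.antipode (R := k)))) ∘ₗ
    (TensorProduct.assoc k U H V).toLinearMap ∘ₗ (TensorProduct.map γ LinearMap.id)

/-- A subset of a ring `A` is a right ideal. -/
def IsRightIdeal {A : Type*} [Ring A] (I : Set A) : Prop :=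
  (0 : A) ∈ I ∧ (∀ x ∈ I, ∀ y ∈ I, x + y ∈ I) ∧ (∀ x ∈ I, ∀ a : A, x * a ∈ I)

/-- `G` is a right Gabriel topology on `A`: a set of right ideals satisfying (T1)-(T4). -/
def IsGabrielTopology {A : Type*} [Ring A] (G : Set (Set A)) : Prop :=
  (∀ I ∈ G, IsRightIdeal I) ∧
  (∀ I ∈ G, ∀ I' : Set A, IsRightIdeal I' → I ⊆ I' → I' ∈ G) ∧
  (∀ I ∈ G, ∀ J ∈ G, I ∩ J ∈ G) ∧
  (∀ I ∈ G, ∀ a : A, {x : A | a * x ∈ I} ∈ G) ∧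
  (∀ I : Set A, IsRightIdeal I → ∀ J ∈ G,
    (∀ a ∈ J, {x : A | a * x ∈ I} ∈ G) → I ∈ G)

/-- Let `G` be a right Gabriel topology on the `H`-module algebra `A`
such that every element of `S(H)` acts `G`-continuously on `A`. If `V` is a `G`-torsion
right `A`-module, then `U ⊗ V` with the twisted action is `G`-torsion, for any right
`H`-comodule `U`. -/
theorem twist_torsion (k : Type*) [Field k] {H A U V : Type*} [Ring H]
    [HopfAlgebra k H] [Ring A] [Algebra k A] [AddCommGroup U] [Module k U]
    [AddCommGroup V] [Module k V] (act : H →ₗ[k] A →ₗ[k] A)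
    (hact : IsModuleAlgebra k act) (G : Set (Set A)) (hG : IsGabrielTopology G)
    (hcont : ∀ h : H, (∃ g : H, HopfAlgebra.antipode (R := k) g = h) →
      ∀ I ∈ G, ∃ J ∈ G, ∀ x ∈ J, act h x ∈ I)
    (γ : U →ₗ[k] U ⊗[k] H) (hγ : IsRightComodule k γ)
    (ψ : A →ₗ[k] V →ₗ[k] V) (hψ : IsRightAction k ψ)
    (htor : ∀ v : V, ∃ I ∈ G, ∀ x ∈ I, ψ x v = 0) :
    ∀ t : U ⊗[k] V, ∃ I ∈ G, ∀ x ∈ I, twistAct k act γ ψ x t = 0 := by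
  obtain ⟨I₀, hI₀, -⟩ := htor 0
  have huniv : (Set.univ : Set A) ∈ G :=
    hG.2.1 I₀ hI₀ Set.univ ⟨trivial, fun _ _ _ _ => trivial, fun _ _ _ => trivial⟩
      (Set.subset_univ _)
  have key : ∀ (w : U ⊗[k] H) (v : V), ∃ I ∈ G, ∀ a ∈ I,
      (TensorProduct.map LinearMap.id
        (TensorProduct.lift (ψ ∘ₗ act.flip a ∘ₗ HopfAlgebra.antipode (R := k))))
        ((TensorProduct.assoc k U H V) (w ⊗ₜ v)) = 0 := by
    intro w v
    induction w using TensorProduct.induction_on with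
    | zero => exact ⟨Set.univ, huniv, fun a _ => by simp⟩
    | tmul u h =>
      obtain ⟨I, hI, hIv⟩ := htor v
      obtain ⟨J, hJ, hJI⟩ := hcont (HopfAlgebra.antipode (R := k) h) ⟨h, rfl⟩ I hI
      refine ⟨J, hJ, fun a ha => ?_⟩
      simp only [TensorProduct.assoc_tmul, TensorProduct.map_tmul,
        TensorProduct.lift.tmul, LinearMap.comp_apply, LinearMap.id_apply,
        LinearMap.flip_apply]
      rw [hIv _ (hJI a ha), TensorProduct.tmul_zero]
    | add w₁ w₂ ih₁ ih₂ =>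
      obtain ⟨I₁, hI₁, h1⟩ := ih₁
      obtain ⟨I₂, hI₂, h2⟩ := ih₂
      refine ⟨I₁ ∩ I₂, hG.2.2.1 I₁ hI₁ I₂ hI₂, fun a ha => ?_⟩
      rw [TensorProduct.add_tmul, map_add, map_add, h1 a ha.1, h2 a ha.2, add_zero]
  intro t
  induction t using TensorProduct.induction_on with
  | zero => exact ⟨Set.univ, huniv, fun a _ => map_zero _⟩
  | tmul u v =>
    obtain ⟨I, hI, h⟩ := key (γ u) v
    refine ⟨I, hI, fun a ha => ?_⟩
    simpa [twistAct] using h a ha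
  | add t₁ t₂ ih₁ ih₂ =>
    obtain ⟨I₁, hI₁, h1⟩ := ih₁
    obtain ⟨I₂, hI₂, h2⟩ := ih₂
    exact ⟨I₁ ∩ I₂, hG.2.2.1 I₁ hI₁ I₂ hI₂, fun a ha => by
      rw [map_add, h1 a ha.1, h2 a ha.2, add_zero]⟩
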